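/- Let n be a positive natural number, let P be an n×n complex Hermitian positive definite matrix and Q an n×n complex Hermitian positive semidefinite matrix, and set X = P + Q. Let μ = λ_max(X^{-1/2} Q X^{-1/2}). Then λ_max(P^{-1/2} Q P^{-1/2}) = μ / (1 − μ), where for a Hermitian positive definite matrix M, M^{-1/2} is the inverse of its Hermitian positive-definite square root and λ_max denotes the largest eigenvalue of a Hermitian matrix. -/

import Mathlib

open Matrix
open scoped ComplexOrder

noncomputable def frobNorm {m n : Type*} [Fintype m] [Fintype n] (A : Matrix m n ℂ) : ℝ :=
  Real.sqrt (∑ i, ∑ j, ‖A i j‖ ^ 2)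

noncomputable def lambdaMax {k : Type*} [Fintype k] [DecidableEq k] {A : Matrix k k ℂ}
    (hA : A.IsHermitian) : ℝ := ⨆ i, hA.eigenvalues i

noncomputable def lambdaMin {k : Type*} [Fintype k] [DecidableEq k] {A : Matrix k k ℂ}
    (hA : A.IsHermitian) : ℝ := ⨅ i, hA.eigenvalues i

noncomputable def invSqrt {k : Type*} [Fintype k] [DecidableEq k] {P : Matrix k k ℂ}
    (hP : P.PosDef) : Matrix k k ℂ :=
  ((hP.posSemidef.1.eigenvectorUnitary : Matrix k k ℂ) *
    diagonal ((↑) ∘ (√·) ∘ hP.posSemidef.1.eigenvalues) *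
    (star hP.posSemidef.1.eigenvectorUnitary : Matrix k k ℂ))⁻¹

theorem invSqrt_isHermitian {k : Type*} [Fintype k] [DecidableEq k] {P : Matrix k k ℂ}
    (hP : P.PosDef) : (invSqrt hP).IsHermitian :=
  by
    unfold invSqrt
    refine IsHermitian.inv ?_
    rw [IsHermitian, conjTranspose_mul, conjTranspose_mul, diagonal_conjTranspose,
      Matrix.mul_assoc]
    simp only [star_eq_conjTranspose, conjTranspose_conjTranspose]
    congr 3
    ext i
    simp [Function.comp]

theorem conj_isHermitian {k : Type*} [Fintype k] [DecidableEq k] {P Q : Matrix k k ℂ}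
    (hP : P.PosDef) (hQ : Q.IsHermitian) : (invSqrt hP * Q * invSqrt hP).IsHermitian := by
  have h := isHermitian_mul_mul_conjTranspose (invSqrt hP) hQ
  rwa [(invSqrt_isHermitian hP).eq] at h

theorem smul_posDef {k : Type*} [Fintype k] [DecidableEq k] {Z : Matrix k k ℂ}
    (hZ : Z.PosDef) {r : ℝ} (hr : 0 < r) : (((r : ℂ)) • Z).PosDef := by
  rw [posDef_iff_dotProduct_mulVec]
  constructor
  · show (((r : ℂ)) • Z)ᴴ = _
    rw [conjTranspose_smul, hZ.1.eq]
    congr 1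
    simp [RCLike.star_def]
  · intro x hx
    rw [smul_mulVec, dotProduct_smul]
    have h2 := hZ.dotProduct_mulVec_pos hx
    have hc : (0 : ℂ) < (r : ℂ) := by exact_mod_cast hr
    exact smul_pos hc h2

/-! For positive definite `M`, `λ_max(M^{-1/2} N M^{-1/2})` is the least `c` with `N ≤ c • M` in the
Loewner order. Since `Q ≤ a • P ↔ (1 + a) • Q ≤ a • (P + Q) ↔ Q ≤ (a / (1 + a)) • (P + Q)` for
`a ≥ 0`, the least constants `a` for `P` and `μ` for `X = P + Q` satisfy `μ = a / (1 + a)`. -/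

open scoped MatrixOrder

lemma IsSelfAdjoint.conjugate_le_conjugate_iff {R : Type*} [Ring R] [PartialOrder R] [StarRing R]
    [StarOrderedRing R] {u a b : R} (hu : IsSelfAdjoint u) (hu' : IsUnit u) :
    u * a * u ≤ u * b * u ↔ a ≤ b := by
  rw [← sub_nonneg, ← sub_nonneg (a := b), ← sub_mul, ← mul_sub]
  nth_rw 1 [← hu.star_eq]
  exact hu'.star_left_conjugate_nonneg_iff

section
variable {k : Type*} [Fintype k] [DecidableEq k]

lemma invSqrt_eq_inv_sqrt {P : Matrix k k ℂ} (hP : P.PosDef) : invSqrt hP = (CFC.sqrt P)⁻¹ := by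
  rw [invSqrt, CFC.sqrt_eq_real_sqrt P hP.posSemidef.nonneg, cfcₙ_eq_cfc,
    hP.posSemidef.1.cfc_eq, IsHermitian.cfc, Unitary.conjStarAlgAut_apply]
  rfl

lemma isUnit_invSqrt {P : Matrix k k ℂ} (hP : P.PosDef) : IsUnit (invSqrt hP) := by
  rw [invSqrt_eq_inv_sqrt, isUnit_nonsing_inv_iff]
  exact (CFC.isUnit_sqrt_iff P hP.posSemidef.nonneg).mpr hP.isUnit

lemma invSqrt_mul_self_mul_invSqrt {P : Matrix k k ℂ} (hP : P.PosDef) :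
    invSqrt hP * P * invSqrt hP = 1 := by
  have hs : IsUnit (CFC.sqrt P).det :=
    (isUnit_iff_isUnit_det _).mp ((CFC.isUnit_sqrt_iff P hP.posSemidef.nonneg).mpr hP.isUnit)
  nth_rw 2 [← CFC.sqrt_mul_sqrt_self P hP.posSemidef.nonneg]
  simp only [invSqrt_eq_inv_sqrt, ← mul_assoc, nonsing_inv_mul _ hs, one_mul, mul_nonsing_inv _ hs]

lemma lambdaMax_le_iff [Nonempty k] {A : Matrix k k ℂ} (hA : A.IsHermitian) (c : ℝ) :
    lambdaMax hA ≤ c ↔ A ≤ algebraMap ℝ _ c := by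
  rw [le_algebraMap_iff_spectrum_le hA.isSelfAdjoint, hA.spectrum_real_eq_range_eigenvalues,
    lambdaMax, ciSup_le_iff (Set.finite_range _).bddAbove, Set.forall_mem_range]

lemma lambdaMax_conj_le_iff [Nonempty k] {M N : Matrix k k ℂ} (hM : M.PosDef) (hN : N.IsHermitian)
    (c : ℝ) : lambdaMax (conj_isHermitian hM hN) ≤ c ↔ N ≤ c • M := by
  rw [lambdaMax_le_iff, Algebra.algebraMap_eq_smul_one, ← invSqrt_mul_self_mul_invSqrt hM,
    ← smul_mul_assoc, ← mul_smul_comm,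
    (invSqrt_isHermitian hM).isSelfAdjoint.conjugate_le_conjugate_iff (isUnit_invSqrt hM)]

lemma lambdaMax_conj_nonneg [Nonempty k] {M N : Matrix k k ℂ} (hM : M.PosDef) (hN : N.PosSemidef) :
    0 ≤ lambdaMax (conj_isHermitian hM hN.1) := by
  have h := hN.mul_mul_conjTranspose_same (invSqrt hM)
  rw [(invSqrt_isHermitian hM).eq] at h
  obtain ⟨i⟩ := ‹Nonempty k›
  exact (h.eigenvalues_nonneg i).trans (le_ciSup (Set.finite_range _).bddAbove i)

end

lemma le_smul_iff_le_smul_add {M : Type*} [AddCommGroup M] [PartialOrder M] [IsOrderedAddMonoid M]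
    [Module ℝ M] [PosSMulMono ℝ M] [PosSMulReflectLE ℝ M] {P Q : M} {a : ℝ} (ha : 0 ≤ a) :
    Q ≤ a • P ↔ Q ≤ (a / (1 + a)) • (P + Q) := by
  have h1a : 0 < 1 + a := by linarith
  have hcancel : (1 + a) * (a / (1 + a)) = a := by field_simp
  rw [← smul_le_smul_iff_of_pos_left h1a (b₂ := (a / (1 + a)) • (P + Q)), smul_smul, hcancel,
    add_smul, one_smul, smul_add, add_le_add_iff_right]

lemma eq_div_one_sub_of_forall_le_iff {x y : ℝ} (hx : 0 ≤ x) (hy : 0 ≤ y)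
    (h : ∀ a, 0 ≤ a → (x ≤ a ↔ y ≤ a / (1 + a))) : x = y / (1 - y) := by
  -- `a = x` gives `y ≤ x / (1 + x) < 1`
  have hxy : y * (1 + x) ≤ x := (le_div_iff₀ (by linarith)).mp ((h x hx).mp le_rfl)
  have hy1 : 0 < 1 - y := by nlinarith
  apply le_antisymm
  · rw [h _ (div_nonneg hy hy1.le)]
    have hinv : y / (1 - y) / (1 + y / (1 - y)) = y := by field_simp; ring
    rw [hinv]
  · rw [div_le_iff₀ hy1]
    linarith

/-- λ_max(P^{-1/2}QP^{-1/2}) = μ/(1-μ) with μ = λ_max(X^{-1/2}QX^{-1/2}), X = P+Q. -/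
theorem stmt13 {n : ℕ} (hn : 0 < n) {P Q : Matrix (Fin n) (Fin n) ℂ}
    (hP : P.PosDef) (hQ : Q.PosSemidef) :
    lambdaMax (conj_isHermitian hP hQ.1) =
      lambdaMax (conj_isHermitian (hP.add_posSemidef hQ) hQ.1) /
        (1 - lambdaMax (conj_isHermitian (hP.add_posSemidef hQ) hQ.1)) := by
  have : Nonempty (Fin n) := Fin.pos_iff_nonempty.mp hn
  have hX := hP.add_posSemidef hQ
  refine eq_div_one_sub_of_forall_le_iff (lambdaMax_conj_nonneg hP hQ)
    (lambdaMax_conj_nonneg hX hQ) fun a ha => ?_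
  rw [lambdaMax_conj_le_iff hP hQ.1, lambdaMax_conj_le_iff hX hQ.1]
  exact le_smul_iff_le_smul_add ha
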